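/- arXiv:1603.04632 — 2 statements merged into one kernel-verified Lean document; each statement's English description precedes it below -/
import Mathlib

section
/- Let X = {x,y,z} be a 3-element set and let δ be a symbolic 3-dissimilarity on X with values in M ∪ {⊙}. Then there exists a labelled level-1 network N on X with δ = δ_N if and only if δ satisfies the Helly-type property: δ(x,y,z) ∈ {δ(x,y), δ(x,z), δ(y,z)}. -/
/-- A rooted phylogenetic network on leaf set `X`: a rooted DAG whose leaves are
identified with `X`, with no vertex of indegree one and outdegree one. -/
structure PhyloNetwork (X : Type) [Fintype X] [DecidableEq X] where
  V : Type
  [instFin : Fintype V]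
  [instDec : DecidableEq V]
  adj : V → V → Prop
  root : V
  leaf : X → V
  acyclic : ∀ v : V, ¬ Relation.TransGen adj v v
  root_no_in : ∀ u : V, ¬ adj u root
  connected : ∀ v : V, Relation.ReflTransGen adj root v
  leaf_inj : Function.Injective leaf
  leaf_no_out : ∀ (x : X) (w : V), ¬ adj (leaf x) w
  leaves_only : ∀ v : V, (∀ w : V, ¬ adj v w) → v = root ∨ ∃ x, leaf x = v
  no_inout_one : ∀ v : V, ¬ ((∃! u : V, adj u v) ∧ (∃! w : V, adj v w))

namespace PhyloNetwork

variable {X : Type} [Fintype X] [DecidableEq X]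

/-- Reachability by a directed path. -/
def reaches (N : PhyloNetwork X) : N.V → N.V → Prop := Relation.ReflTransGen N.adj

/-- The offspring set of a vertex: all leaves descendants it. -/
def F (N : PhyloNetwork X) (v : N.V) : Set X := {x | N.reaches v (N.leaf x)}

/-- `v` is a leaf vertex. -/
def IsLeafV (N : PhyloNetwork X) (v : N.V) : Prop := ∃ x, N.leaf x = v

/-- `v` is a lowest common ancestor of the set `Y` of leaves. -/
def IsLca (N : PhyloNetwork X) (Y : Finset X) (v : N.V) : Prop :=
  (∀ x ∈ Y, x ∈ N.F v) ∧ ∀ w : N.V, N.adj v w → ¬ (∀ x ∈ Y, x ∈ N.F w)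

/-- A cycle of a (level-1) network: two edge-disjoint, internally vertex-disjoint
directed paths from a root `r` to a hybrid `h`, with at least 3 vertices in total.
`side1` and `side2` list the internal vertices of the two sides in order. -/
structure NCycle (N : PhyloNetwork X) where
  r : N.V
  h : N.V
  side1 : List N.V
  side2 : List N.V
  chain1 : List.Chain N.adj r (side1 ++ [h])
  chain2 : List.Chain N.adj r (side2 ++ [h])
  ne : r ≠ h
  nodup1 : (r :: (side1 ++ [h])).Nodup
  nodup2 : (r :: (side2 ++ [h])).Nodup
  disj : ∀ v ∈ side1, v ∉ side2
  nontriv : side1 ≠ [] ∨ side2 ≠ []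

/-- The vertex set of a cycle. -/
def NCycle.verts {N : PhyloNetwork X} (C : NCycle N) : Set N.V :=
  {C.r, C.h} ∪ {v | v ∈ C.side1} ∪ {v | v ∈ C.side2}

/-- A level-1 network: every vertex belongs to at most one cycle. -/
def IsLevelOne (N : PhyloNetwork X) : Prop :=
  ∀ C C' : NCycle N, ∀ v : N.V, v ∈ C.verts → v ∈ C'.verts → C.verts = C'.verts

/-- `R(C)`: the leaves descendants the root of the cycle `C`. -/
def NCycle.RC {N : PhyloNetwork X} (C : NCycle N) : Set X := N.F C.r

/-- `H(C)`: the leaves descendants the hybrid of the cycle `C`. -/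
def NCycle.HC {N : PhyloNetwork X} (C : NCycle N) : Set X := N.F C.h

/-- `v` is the last ancestor `v_C(x)` of the leaf `x` lying in the cycle `C`. -/
def NCycle.LastAnc {N : PhyloNetwork X} (C : NCycle N) (v : N.V) (x : X) : Prop :=
  v ∈ C.verts ∧ N.reaches v (N.leaf x) ∧
    ∀ w ∈ C.verts, N.reaches w (N.leaf x) → N.reaches w v

end PhyloNetwork

/-- A symbolic 3-dissimilarity on `X` with values in `M ∪ {⊙}` (`⊙` = `none`):
singletons get `⊙`, sets of size 2 or 3 get values in `M`. -/
structure SymbolicDissim3 (X M : Type) [DecidableEq X] where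
  val : Finset X → Option M
  singleton_none : ∀ A : Finset X, A.card = 1 → val A = none
  pair_some : ∀ A : Finset X, A.card = 2 ∨ A.card = 3 → val A ≠ none

/-- The labelled network `(N,t)` represents `δ`: for every `Y ⊆ X` of size 2 or 3,
`δ(Y) = t(lca_N(Y))`. -/
def PhyloNetwork.Represents {X M : Type} [Fintype X] [DecidableEq X]
    (N : PhyloNetwork X) (t : N.V → M) (d : SymbolicDissim3 X M) : Prop :=
  ∀ Y : Finset X, Y.card = 2 ∨ Y.card = 3 → ∀ v : N.V, N.IsLca Y v → d.val Y = some (t v)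

/-- `δ` is level-1 representable. -/
def SymbolicDissim3.LevelOneRepresentable {X M : Type} [Fintype X] [DecidableEq X]
    (d : SymbolicDissim3 X M) : Prop :=
  ∃ (N : PhyloNetwork X) (t : N.V → M), N.IsLevelOne ∧ N.Represents t d

/-! Forward direction: let `v` be a lowest common ancestor of `x, y, z` and suppose it is not one
of any pair. Then `v` has children `c₁ ⊇ {x, y}`, `c₂ ⊇ {x, z}`, `c₃ ⊇ {y, z}`, with `c₁ ≠ c₂ ≠ c₃`
since no child lies above all three leaves. Paths `c₁ ⋯ x` and `c₂ ⋯ x` close a cycle at `v`, and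
so do `c₂ ⋯ z` and `c₃ ⋯ z`. In a level-1 network these two cycles coincide, so the hybrid of the
first lies above the hybrid of the second and `c₁` lies above `z` too, a contradiction. Hence
`δ(x, y, z) = t(v)` is also the value of one of the pairs.

Backward direction: if `δ(x, y, z) = δ(x, y)`, take the root `ρ` with children `a, b`, edges
`a → x`, `b → y`, and a hybrid `h` with `a → h`, `b → h`, `h → z`. Its only cycle is `ρ a h b`,
and the lowest common ancestors are `ρ` for `{x, y}` and `{x, y, z}`, `a` for `{x, z}` and `b` for
`{y, z}`, so labelling `ρ, a, b` by `δ(x, y), δ(x, z), δ(y, z)` represents `δ`. -/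

open Relation

namespace List

variable {α : Type*}

theorem exists_eq_append_cons_of_first_mem {l₁ l₂ : List α} {a : α} (ha₁ : a ∈ l₁)
    (ha₂ : a ∈ l₂) : ∃ s b t, l₁ = s ++ b :: t ∧ b ∈ l₂ ∧ ∀ c ∈ s, c ∉ l₂ := by
  induction l₁ with
  | nil => simp at ha₁
  | cons c l ih =>
    by_cases hc : c ∈ l₂
    · exact ⟨[], c, l, rfl, hc, by simp⟩
    · have ha : a ∈ l := (mem_cons.1 ha₁).resolve_left (by rintro rfl; exact hc ha₂)
      obtain ⟨s, b, t, rfl, hb, hs⟩ := ih ha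
      exact ⟨c :: s, b, t, rfl, hb, by simpa [hc] using hs⟩

theorem IsChain.nodup_of_acyclic {r : α → α → Prop} (hr : ∀ a, ¬ TransGen r a a) {l : List α}
    (h : IsChain r l) : l.Nodup :=
  (h.imp fun _ _ => TransGen.single).pairwise.imp fun hab => by rintro rfl; exact hr _ hab

theorem IsChain.rel_getLast_cons_of_append_singleton {r : α → α → Prop} {a b : α} {l : List α}
    (h : IsChain r (a :: (l ++ [b]))) : r ((a :: l).getLast (cons_ne_nil a l)) b := by
  rw [← cons_append, isChain_append] at h
  exact h.2.2 _ (by simp [getLast?_eq_some_getLast]) b rfl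

theorem getLast_cons_mem_or_eq (a : α) (l : List α) :
    (a :: l).getLast (cons_ne_nil a l) ∈ l ∨ l = [] ∧ (a :: l).getLast (cons_ne_nil a l) = a := by
  rcases eq_or_ne l [] with rfl | hl
  · exact Or.inr ⟨rfl, rfl⟩
  · exact Or.inl (getLast_cons hl ▸ getLast_mem hl)

end List

namespace PhyloNetwork

variable {X : Type} [Fintype X] [DecidableEq X] {N : PhyloNetwork X}

theorem exists_isLca (N : PhyloNetwork X) (Y : Finset X) : ∃ v, N.IsLca Y v := by
  have : Finite N.V := @Finite.of_fintype _ N.instFin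
  have hwf : WellFounded (flip (TransGen N.adj)) :=
    @Finite.wellFounded_of_trans_of_irrefl _ _ _ ⟨fun _ _ _ h₁ h₂ => h₂.trans h₁⟩ ⟨N.acyclic⟩
  obtain ⟨v, hv, hmin⟩ := hwf.has_min {v | ∀ a ∈ Y, a ∈ N.F v}
    ⟨N.root, fun _ _ => N.connected _⟩
  exact ⟨v, hv, fun w hw hcov => hmin w hcov (.single hw)⟩

theorem exists_nCycle_of_adj_of_adj {v c₁ c₂ u : N.V} (h₁ : N.adj v c₁) (h₂ : N.adj v c₂)
    (hne : c₁ ≠ c₂) (hu₁ : N.reaches c₁ u) (hu₂ : N.reaches c₂ u) :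
    ∃ C : NCycle N, C.r = v ∧ N.reaches c₁ C.h ∧ N.reaches C.h u := by
  obtain ⟨l₁, hl₁, hlast₁⟩ := List.exists_isChain_cons_of_relationReflTransGen hu₁
  obtain ⟨l₂, hl₂, hlast₂⟩ := List.exists_isChain_cons_of_relationReflTransGen hu₂
  -- `h` is the first vertex of the path `c₁ ⋯ u` that also lies on the path `c₂ ⋯ u`
  obtain ⟨s₁, h, t₁, hsplit₁, hh₂, hs₁⟩ := List.exists_eq_append_cons_of_first_mem
    (hlast₁ ▸ List.getLast_mem _) (hlast₂ ▸ List.getLast_mem _)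
  obtain ⟨s₂, t₂, hsplit₂⟩ := List.append_of_mem hh₂
  have hh₁ : h ∈ c₁ :: l₁ := by simp [hsplit₁]
  have hchain₁ : List.IsChain N.adj (v :: (s₁ ++ h :: t₁)) := hsplit₁ ▸ hl₁.cons_cons h₁
  have hchain₂ : List.IsChain N.adj (v :: (s₂ ++ h :: t₂)) := hsplit₂ ▸ hl₂.cons_cons h₂
  have hpre₁ : v :: (s₁ ++ [h]) <+: v :: (s₁ ++ h :: t₁) := ⟨t₁, by simp⟩
  have hpre₂ : v :: (s₂ ++ [h]) <+: v :: (s₂ ++ h :: t₂) := ⟨t₂, by simp⟩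
  have hnd₁ := hchain₁.nodup_of_acyclic N.acyclic
  have hnontriv : s₁ ≠ [] ∨ s₂ ≠ [] := by
    by_contra! hnil
    obtain ⟨rfl, rfl⟩ := hnil
    simp only [List.nil_append, List.cons.injEq] at hsplit₁ hsplit₂
    exact hne (hsplit₁.1.trans hsplit₂.1.symm)
  refine ⟨⟨v, h, s₁, s₂, hchain₁.prefix hpre₁, hchain₂.prefix hpre₂, ?_,
    hnd₁.sublist hpre₁.sublist, (hchain₂.nodup_of_acyclic N.acyclic).sublist hpre₂.sublist,
    fun a ha ha₂ => hs₁ a ha (hsplit₂ ▸ List.mem_append_left _ ha₂), hnontriv⟩, rfl, ?_, ?_⟩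
  · rintro rfl
    exact (List.nodup_cons.1 hnd₁).1 (by simp)
  · exact hl₁.induction (N.reaches c₁ ·) _ (fun _ _ hxy hx => hx.tail hxy) (fun _ => .refl) h hh₁
  · exact hl₁.backwards_cons_induction (N.reaches · u) _ hlast₁ (fun _ _ hxy hy => hy.head hxy)
      .refl h hh₁

theorem NCycle.reaches_h (C : NCycle N) : ∀ w ∈ C.verts, N.reaches w C.h := by
  have back (s : List N.V) (hs : List.IsChain N.adj (C.r :: s ++ [C.h])) :
      ∀ w ∈ C.r :: s, N.reaches w C.h :=
    hs.backwards_concat_induction _ _ (fun _ _ hxy hy => hy.head hxy) .refl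
  rintro w ((hw | hw) | hw)
  · rcases hw with rfl | rfl
    exacts [back _ C.chain1 _ List.mem_cons_self, .refl]
  · exact back _ C.chain1 w (List.mem_cons_of_mem _ hw)
  · exact back _ C.chain2 w (List.mem_cons_of_mem _ hw)

theorem NCycle.r_reaches (C : NCycle N) : ∀ w ∈ C.verts, N.reaches C.r w := by
  have forth (s : List N.V) (hs : List.IsChain N.adj (C.r :: (s ++ [C.h]))) :
      ∀ w ∈ C.r :: (s ++ [C.h]), N.reaches C.r w :=
    hs.induction _ _ (fun _ _ hxy hx => hx.tail hxy) (fun _ => .refl)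
  rintro w ((hw | hw) | hw)
  · rcases hw with rfl | rfl
    exacts [.refl, forth _ C.chain1 _ (by simp)]
  · exact forth _ C.chain1 w (List.mem_cons_of_mem _ (List.mem_append_left _ hw))
  · exact forth _ C.chain2 w (List.mem_cons_of_mem _ (List.mem_append_left _ hw))

theorem NCycle.exists_ne_adj_h (C : NCycle N) :
    ∃ p₁ ∈ C.verts, ∃ p₂ ∈ C.verts, p₁ ≠ p₂ ∧ N.adj p₁ C.h ∧ N.adj p₂ C.h := by
  have hr₁ : C.r ∉ C.side1 := fun h => (List.nodup_cons.1 C.nodup1).1 (List.mem_append_left _ h)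
  have hr₂ : C.r ∉ C.side2 := fun h => (List.nodup_cons.1 C.nodup2).1 (List.mem_append_left _ h)
  refine ⟨_, ?_, _, ?_, ?_, C.chain1.rel_getLast_cons_of_append_singleton,
    C.chain2.rel_getLast_cons_of_append_singleton⟩
  · rcases List.getLast_cons_mem_or_eq C.r C.side1 with h | ⟨-, h⟩
    exacts [.inl (.inr h), .inl (.inl (.inl h))]
  · rcases List.getLast_cons_mem_or_eq C.r C.side2 with h | ⟨-, h⟩
    exacts [.inr h, .inl (.inl (.inl h))]
  · intro heq
    rcases List.getLast_cons_mem_or_eq C.r C.side1 with h₁ | ⟨hnil₁, h₁⟩ <;>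
      rcases List.getLast_cons_mem_or_eq C.r C.side2 with h₂ | ⟨hnil₂, h₂⟩
    · exact C.disj _ h₁ (heq ▸ h₂)
    · exact hr₁ (heq.trans h₂ ▸ h₁)
    · exact hr₂ (heq.symm.trans h₁ ▸ h₂)
    · exact C.nontriv.elim (· hnil₁) (· hnil₂)

theorem exists_adj_subset_F_of_not_isLca {Y : Finset X} {v : N.V} (hY : ∀ a ∈ Y, a ∈ N.F v)
    (h : ¬ N.IsLca Y v) : ∃ c, N.adj v c ∧ ∀ a ∈ Y, a ∈ N.F c := by
  by_contra hc
  exact h ⟨hY, fun c hvc hcY => hc ⟨c, hvc, hcY⟩⟩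

theorem IsLevelOne.isLca_pair_of_isLca_triple (hN : N.IsLevelOne) {x y z : X} {v : N.V}
    (hv : N.IsLca {x, y, z} v) :
    N.IsLca {x, y} v ∨ N.IsLca {x, z} v ∨ N.IsLca {y, z} v := by
  by_contra! h
  obtain ⟨hxy, hxz, hyz⟩ := h
  have hx : x ∈ N.F v := hv.1 x (by simp)
  have hy : y ∈ N.F v := hv.1 y (by simp)
  have hz : z ∈ N.F v := hv.1 z (by simp)
  have hall (c : N.V) (hc : N.adj v c) (hx : x ∈ N.F c) (hy : y ∈ N.F c) (hz : z ∈ N.F c) :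
      False :=
    hv.2 c hc (by simp [hx, hy, hz])
  obtain ⟨c₁, hvc₁, hc₁⟩ := exists_adj_subset_F_of_not_isLca (by simp [hx, hy]) hxy
  obtain ⟨c₂, hvc₂, hc₂⟩ := exists_adj_subset_F_of_not_isLca (by simp [hx, hz]) hxz
  obtain ⟨c₃, hvc₃, hc₃⟩ := exists_adj_subset_F_of_not_isLca (by simp [hy, hz]) hyz
  simp only [Finset.mem_insert, Finset.mem_singleton, forall_eq_or_imp, forall_eq] at hc₁ hc₂ hc₃
  have hne₁₂ : c₁ ≠ c₂ := by rintro rfl; exact hall c₁ hvc₁ hc₁.1 hc₁.2 hc₂.2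
  have hne₂₃ : c₂ ≠ c₃ := by rintro rfl; exact hall c₂ hvc₂ hc₂.1 hc₃.1 hc₂.2
  obtain ⟨C, hCr, hc₁C, -⟩ := exists_nCycle_of_adj_of_adj hvc₁ hvc₂ hne₁₂ hc₁.1 hc₂.1
  obtain ⟨C', hC'r, -, hC'z⟩ := exists_nCycle_of_adj_of_adj hvc₂ hvc₃ hne₂₃ hc₂.2 hc₃.2
  have hCC' : C.verts = C'.verts := hN C C' v (hCr ▸ .inl (.inl (.inl rfl)))
    (hC'r ▸ .inl (.inl (.inl rfl)))
  have hCh : C.h ∈ C'.verts := hCC' ▸ .inl (.inl (.inr rfl))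
  exact hall c₁ hvc₁ hc₁.1 hc₁.2 (hc₁C.trans ((C'.reaches_h _ hCh).trans hC'z))

end PhyloNetwork

theorem Finset.eq_pair_or_eq_triple_of_two_le_card {α : Type*} [DecidableEq α] {x y z : α}
    (hcover : ∀ w : α, w = x ∨ w = y ∨ w = z) {Y : Finset α} (hY : 2 ≤ Y.card) :
    Y = {x, y} ∨ Y = {x, z} ∨ Y = {y, z} ∨ Y = {x, y, z} := by
  have hsub (T : Finset α) (hT : ∀ w ∈ Y, w = x ∨ w = y ∨ w = z → w ∈ T) : Y ⊆ T :=
    fun w hw => hT w hw (hcover w)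
  have eq_pair {a b : α} (hab : Y ⊆ {a, b}) : Y = {a, b} :=
    Finset.eq_of_subset_of_card_le hab (Finset.card_le_two.trans hY)
  by_cases hx : x ∈ Y
  · by_cases hy : y ∈ Y
    · by_cases hz : z ∈ Y
      · refine .inr (.inr (.inr (Finset.Subset.antisymm (hsub _ ?_) ?_)))
        · rintro w - (rfl | rfl | rfl) <;> simp
        · simp [Finset.insert_subset_iff, hx, hy, hz]
      · exact .inl (eq_pair (hsub _ (by rintro w hw (rfl | rfl | rfl) <;> simp_all)))
    · exact .inr (.inl (eq_pair (hsub _ (by rintro w hw (rfl | rfl | rfl) <;> simp_all))))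
  · exact .inr (.inr (.inl (eq_pair (hsub _ (by rintro w hw (rfl | rfl | rfl) <;> simp_all)))))

inductive HybridTriangle
  | root | left | right | hybrid | leafX | leafY | leafZ
  deriving DecidableEq

namespace HybridTriangle

instance : Fintype HybridTriangle :=
  .ofList [root, left, right, hybrid, leafX, leafY, leafZ] fun v => by cases v <;> decide

def adj : HybridTriangle → HybridTriangle → Bool
  | root, left | root, right | left, hybrid | right, hybrid
  | left, leafX | right, leafY | hybrid, leafZ => true
  | _, _ => false

def descendants : HybridTriangle → List HybridTriangle
  | root => [root, left, right, hybrid, leafX, leafY, leafZ]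
  | left => [left, hybrid, leafX, leafZ]
  | right => [right, hybrid, leafY, leafZ]
  | hybrid => [hybrid, leafZ]
  | v => [v]

def height : HybridTriangle → ℕ
  | root => 3 | left | right => 2 | hybrid => 1 | _ => 0

theorem height_lt_of_adj : ∀ a b, adj a b → height b < height a := by decide

theorem reflTransGen_adj_iff {a b : HybridTriangle} :
    ReflTransGen (fun a b => adj a b) a b ↔ b ∈ descendants a := by
  constructor
  · intro h
    induction h with
    | refl => exact (by decide : ∀ a, a ∈ descendants a) a
    | tail _ hbc ih =>
      exact (by decide : ∀ a b c, b ∈ descendants a → adj b c → c ∈ descendants a) _ _ _ ih hbc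
  · intro h
    induction hn : height a using Nat.strong_induction_on generalizing a with
    | _ n ih =>
      rcases (by decide : ∀ a b, b ∈ descendants a →
          b = a ∨ ∃ c, adj a c ∧ b ∈ descendants c) a b h with rfl | ⟨c, hac, hc⟩
      · exact .refl
      · exact .head hac (ih _ (hn ▸ height_lt_of_adj a c hac) hc rfl)

def IsLcaOf (S : Finset HybridTriangle) (v : HybridTriangle) : Prop :=
  (∀ b ∈ S, b ∈ descendants v) ∧ ∀ w, adj v w → ¬ ∀ b ∈ S, b ∈ descendants w

instance (S : Finset HybridTriangle) : DecidablePred (IsLcaOf S) :=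
  fun _ => by unfold IsLcaOf; infer_instance

variable {X : Type} [DecidableEq X]

def leafOf (x y w : X) : HybridTriangle :=
  if w = x then leafX else if w = y then leafY else leafZ

theorem leafOf_left {x y : X} : leafOf x y x = leafX := by simp [leafOf]

theorem leafOf_right {x y : X} (hxy : x ≠ y) : leafOf x y y = leafY := by
  simp [leafOf, hxy.symm]

theorem leafOf_of_ne {x y z : X} (hxz : x ≠ z) (hyz : y ≠ z) : leafOf x y z = leafZ := by
  simp [leafOf, hxz.symm, hyz.symm]

variable [Fintype X]

def network (x y z : X) (hxy : x ≠ y) (hxz : x ≠ z) (hyz : y ≠ z)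
    (hcover : ∀ w : X, w = x ∨ w = y ∨ w = z) : PhyloNetwork X where
  V := HybridTriangle
  adj a b := adj a b
  root := root
  leaf := leafOf x y
  acyclic v hv := by
    have hlt : ∀ {a b}, TransGen (fun a b => adj a b) a b → height b < height a := fun h =>
      h.trans_induction_on (height_lt_of_adj _ _) fun _ _ h₁ h₂ => h₂.trans h₁
    exact lt_irrefl _ (hlt hv)
  root_no_in := by decide
  connected v := reflTransGen_adj_iff.2 (by cases v <;> decide)
  leaf_inj a b hab := by
    rcases hcover a with rfl | rfl | rfl <;> rcases hcover b with rfl | rfl | rfl <;>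
      simp_all [leafOf_left, leafOf_right, leafOf_of_ne]
  leaf_no_out a := by unfold leafOf; split_ifs <;> decide
  leaves_only v hv := by
    rcases (by decide : ∀ v, (∀ w, ¬ adj v w) → v = root ∨ v = leafX ∨ v = leafY ∨ v = leafZ)
      v hv with h | rfl | rfl | rfl
    exacts [.inl h, .inr ⟨x, leafOf_left⟩, .inr ⟨y, leafOf_right hxy⟩,
      .inr ⟨z, leafOf_of_ne hxz hyz⟩]
  no_inout_one := by simp only [Fintype.existsUnique_iff_card_one]; decide

section network

variable {x y z : X} {hxy : x ≠ y} {hxz : x ≠ z} {hyz : y ≠ z}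
  {hcover : ∀ w : X, w = x ∨ w = y ∨ w = z}

theorem nCycle_verts_eq (C : PhyloNetwork.NCycle (network x y z hxy hxz hyz hcover)) :
    C.verts = {root, left, right, hybrid} := by
  obtain ⟨p₁, hp₁, p₂, hp₂, hne, h₁, h₂⟩ := C.exists_ne_adj_h
  obtain ⟨hh, hp⟩ := (by decide : ∀ p₁ p₂ h, p₁ ≠ p₂ → adj p₁ h → adj p₂ h →
    h = hybrid ∧ (p₁ = left ∧ p₂ = right ∨ p₁ = right ∧ p₂ = left)) p₁ p₂ C.h hne h₁ h₂
  obtain ⟨hleft, hright⟩ : left ∈ C.verts ∧ right ∈ C.verts := by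
    rcases hp with ⟨rfl, rfl⟩ | ⟨rfl, rfl⟩
    exacts [⟨hp₁, hp₂⟩, ⟨hp₂, hp₁⟩]
  have hr : C.r = root :=
    (by decide : ∀ r, left ∈ descendants r → right ∈ descendants r → r = root) C.r
      (reflTransGen_adj_iff.1 (C.r_reaches _ hleft))
      (reflTransGen_adj_iff.1 (C.r_reaches _ hright))
  apply Set.Subset.antisymm
  · intro w hw
    exact (by decide : ∀ w, hybrid ∈ descendants w →
      w = root ∨ w = left ∨ w = right ∨ w = hybrid) w
      (hh ▸ reflTransGen_adj_iff.1 (C.reaches_h w hw))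
  · have hroot : root ∈ C.verts := hr ▸ .inl (.inl (.inl rfl))
    have hhybrid : hybrid ∈ C.verts := hh ▸ .inl (.inl (.inr rfl))
    exact Set.insert_subset hroot (Set.insert_subset hleft (Set.insert_subset hright
      (Set.singleton_subset_iff.2 hhybrid)))

theorem isLevelOne_network : (network x y z hxy hxz hyz hcover).IsLevelOne :=
  fun C C' _ _ _ => (nCycle_verts_eq C).trans (nCycle_verts_eq C').symm

theorem isLca_network_iff {Y : Finset X} {v : HybridTriangle} :
    (network x y z hxy hxz hyz hcover).IsLca Y v ↔ IsLcaOf (Y.image (leafOf x y)) v := by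
  simp [PhyloNetwork.IsLca, PhyloNetwork.F, PhyloNetwork.reaches, IsLcaOf, network,
    reflTransGen_adj_iff]

end network

end HybridTriangle

open HybridTriangle in
theorem SymbolicDissim3.levelOneRepresentable_of_val_triple_eq_val_pair {X M : Type}
    [Fintype X] [DecidableEq X] {x y z : X} (hxy : x ≠ y) (hxz : x ≠ z) (hyz : y ≠ z)
    (hcover : ∀ w : X, w = x ∨ w = y ∨ w = z) (d : SymbolicDissim3 X M)
    (h : d.val {x, y, z} = d.val {x, y}) : d.LevelOneRepresentable := by
  obtain ⟨m₁, hm₁⟩ := Option.ne_none_iff_exists'.1 (d.pair_some _ (.inl (Finset.card_pair hxy)))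
  obtain ⟨m₂, hm₂⟩ := Option.ne_none_iff_exists'.1 (d.pair_some _ (.inl (Finset.card_pair hxz)))
  obtain ⟨m₃, hm₃⟩ := Option.ne_none_iff_exists'.1 (d.pair_some _ (.inl (Finset.card_pair hyz)))
  refine ⟨network x y z hxy hxz hyz hcover, fun | left => m₂ | right => m₃ | _ => m₁,
    isLevelOne_network, fun Y hY v hv => ?_⟩
  replace hv := isLca_network_iff.1 hv
  rcases Finset.eq_pair_or_eq_triple_of_two_le_card hcover (by omega : 2 ≤ Y.card)
    with rfl | rfl | rfl | rfl <;>
    simp only [Finset.image_insert, Finset.image_singleton, leafOf_left, leafOf_right hxy,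
      leafOf_of_ne hxz hyz] at hv
  · rw [(by decide : ∀ v, IsLcaOf {leafX, leafY} v → v = root) v hv]; exact hm₁
  · rw [(by decide : ∀ v, IsLcaOf {leafX, leafZ} v → v = left) v hv]; exact hm₂
  · rw [(by decide : ∀ v, IsLcaOf {leafY, leafZ} v → v = right) v hv]; exact hm₃
  · rw [(by decide : ∀ v, IsLcaOf {leafX, leafY, leafZ} v → v = root) v hv]; exact h.trans hm₁

theorem levelOneRepresentable_iff_helly_on_three_general {X M : Type}
    [Fintype X] [DecidableEq X]
    (x y z : X) (hxy : x ≠ y) (hxz : x ≠ z) (hyz : y ≠ z)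
    (hcover : ∀ w : X, w = x ∨ w = y ∨ w = z)
    (d : SymbolicDissim3 X M) :
    d.LevelOneRepresentable ↔
      (d.val {x, y, z} = d.val {x, y} ∨ d.val {x, y, z} = d.val {x, z} ∨
        d.val {x, y, z} = d.val {y, z}) := by
  constructor
  · rintro ⟨N, t, hN, hrep⟩
    obtain ⟨v, hv⟩ := N.exists_isLca {x, y, z}
    have hval := hrep _ (.inr (Finset.card_eq_three.2 ⟨x, y, z, hxy, hxz, hyz, rfl⟩)) v hv
    rcases hN.isLca_pair_of_isLca_triple hv with h | h | h
    · exact .inl (hval.trans (hrep _ (.inl (Finset.card_pair hxy)) v h).symm)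
    · exact .inr (.inl (hval.trans (hrep _ (.inl (Finset.card_pair hxz)) v h).symm))
    · exact .inr (.inr (hval.trans (hrep _ (.inl (Finset.card_pair hyz)) v h).symm))
  · rintro (h | h | h)
    · exact d.levelOneRepresentable_of_val_triple_eq_val_pair hxy hxz hyz hcover h
    · refine d.levelOneRepresentable_of_val_triple_eq_val_pair hxz hxy hyz.symm
        (fun w => by have := hcover w; tauto) ?_
      rwa [Finset.pair_comm z y]
    · refine d.levelOneRepresentable_of_val_triple_eq_val_pair hyz hxy.symm hxz.symm
        (fun w => by have := hcover w; tauto) ?_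
      rwa [Finset.pair_comm z x, Finset.insert_comm y x]

/-- For a symbolic 3-dissimilarity on a 3-set `X = {x,y,z}`: `δ` has a level-1
representation iff it satisfies the Helly-type property
`δ(x,y,z) ∈ {δ(x,y), δ(x,z), δ(y,z)}`. -/
theorem levelOneRepresentable_iff_helly_on_three {X M : Type}
    [Fintype X] [DecidableEq X] [Fintype M] [DecidableEq M]
    (x y z : X) (hxy : x ≠ y) (hxz : x ≠ z) (hyz : y ≠ z)
    (hcover : ∀ w : X, w = x ∨ w = y ∨ w = z)
    (d : SymbolicDissim3 X M) :
    d.LevelOneRepresentable ↔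
      (d.val {x, y, z} = d.val {x, y} ∨ d.val {x, y, z} = d.val {x, z} ∨
        d.val {x, y, z} = d.val {y, z}) :=
  levelOneRepresentable_iff_helly_on_three_general x y z hxy hxz hyz hcover d
end

section
/- Let N = (N,t) be a labelled level-1 network on X, C a cycle of N, and x, y, z ∈ X with x ∈ H(C), y, z ∈ R(C) − H(C), and t(v_C(z)) = t(r(C)) ≠ t(v_C(y)). Then v_C(z) lies on the directed path from v_C(y) to h(C) if and only if δ_N(x,y,z) = δ_N(x,y) = δ_N(y,z) ≠ δ_N(x,z) (i.e., y|xz is a δ_N-triplet). -/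
namespace PhyloNetwork

variable {X : Type} [Fintype X] [DecidableEq X] {N : PhyloNetwork X}

theorem not_reaches_of_adj {a b : N.V} (hab : N.adj a b) : ¬ N.reaches b a :=
  fun hba => N.acyclic a (Relation.TransGen.head' hab hba)

theorem reaches_antisymm {a b : N.V} (hab : N.reaches a b) (hba : N.reaches b a) : a = b := by
  rcases Relation.ReflTransGen.cases_head hab with h | ⟨c, hac, hcb⟩
  · exact h
  · exact (not_reaches_of_adj hac (hcb.trans hba)).elim

theorem nodup_of_isChain {l : List N.V} (hl : l.IsChain N.adj) : l.Nodup :=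
  (List.isChain_iff_pairwise.mp (hl.imp fun _ _ => Relation.TransGen.single)).imp
    fun {a _} hab e => by subst e; exact N.acyclic a hab

theorem reaches_of_mem_chain {a b v : N.V} {l : List N.V}
    (hl : (a :: (l ++ [b])).IsChain N.adj) (hv : v ∈ a :: (l ++ [b])) :
    N.reaches a v ∧ N.reaches v b := by
  have hp : (a :: (l ++ [b])).Pairwise (Relation.ReflTransGen N.adj) :=
    List.isChain_iff_pairwise.mp (hl.imp fun _ _ => Relation.ReflTransGen.single)
  constructor
  · rcases List.mem_cons.mp hv with rfl | hv
    · exact .refl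
    · exact (List.pairwise_cons.mp hp).1 v hv
  · rw [← List.cons_append] at hp hv
    rcases List.mem_append.mp hv with hv | hv
    · exact (List.pairwise_append.mp hp).2.2 v hv b (List.mem_singleton_self b)
    · rw [List.mem_singleton.mp hv]
      exact .refl

theorem exists_adj_of_mem_chain {a b v : N.V} {l : List N.V}
    (hl : (a :: (l ++ [b])).IsChain N.adj) (hv : v ∈ a :: l) : ∃ c ∈ l ++ [b], N.adj v c := by
  induction l generalizing a with
  | nil => exact ⟨b, List.mem_singleton_self b, List.mem_singleton.mp hv ▸ List.isChain_pair.mp hl⟩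
  | cons a' l ih =>
    obtain ⟨haa', hl⟩ := List.isChain_cons_cons.mp hl
    rcases List.mem_cons.mp hv with rfl | hv
    · exact ⟨a', List.mem_cons_self, haa'⟩
    · obtain ⟨c, hc, hvc⟩ := ih hl hv
      exact ⟨c, List.mem_cons_of_mem a' hc, hvc⟩

theorem exists_fork {a b c : N.V} (hab : N.reaches a b) (hac : N.reaches a c)
    (hbc : ¬ N.reaches b c) (hcb : ¬ N.reaches c b) :
    ∃ p u₁ u₂, N.reaches a p ∧ N.adj p u₁ ∧ N.adj p u₂ ∧ u₁ ≠ u₂ ∧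
      N.reaches u₁ b ∧ N.reaches u₂ c := by
  revert hac
  induction hab using Relation.ReflTransGen.head_induction_on with
  | refl => exact fun hac => (hbc hac).elim
  | @head a a' haa' ha'b ih =>
    intro hac
    rcases Relation.ReflTransGen.cases_head hac with rfl | ⟨e, hae, hec⟩
    · exact (hcb (.head haa' ha'b)).elim
    · by_cases he : e = a'
      · subst he
        obtain ⟨p, u₁, u₂, hp, h⟩ := ih hec
        exact ⟨p, u₁, u₂, .head hae hp, h⟩
      · exact ⟨a, a', e, .refl, haa', hae, Ne.symm he, ha'b, hec⟩

namespace NCycle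

variable {C : NCycle N}

theorem mem_verts_iff {v : N.V} :
    v ∈ C.verts ↔ v ∈ C.r :: (C.side1 ++ [C.h]) ∨ v ∈ C.r :: (C.side2 ++ [C.h]) := by
  simp only [verts, Set.mem_union, Set.mem_insert_iff, Set.mem_singleton_iff, Set.mem_ofPred_eq,
    List.mem_cons, List.mem_append]
  tauto

theorem root_mem (C : NCycle N) : C.r ∈ C.verts := mem_verts_iff.mpr (.inl List.mem_cons_self)

theorem hyb_mem (C : NCycle N) : C.h ∈ C.verts := mem_verts_iff.mpr (.inl (by simp))

theorem root_reaches {v : N.V} (hv : v ∈ C.verts) : N.reaches C.r v := by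
  rcases mem_verts_iff.mp hv with hv | hv
  exacts [(reaches_of_mem_chain C.chain1 hv).1, (reaches_of_mem_chain C.chain2 hv).1]

theorem reaches_hyb {v : N.V} (hv : v ∈ C.verts) : N.reaches v C.h := by
  rcases mem_verts_iff.mp hv with hv | hv
  exacts [(reaches_of_mem_chain C.chain1 hv).2, (reaches_of_mem_chain C.chain2 hv).2]

theorem exists_adj_of_ne_hyb {v : N.V} (hv : v ∈ C.verts) (hvh : v ≠ C.h) :
    ∃ c ∈ C.verts, N.adj v c := by
  have hside : ∀ {l : List N.V}, v ∈ C.r :: (l ++ [C.h]) → v ∈ C.r :: l := fun hv => by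
    simpa [hvh] using hv
  rcases mem_verts_iff.mp hv with hv | hv
  · obtain ⟨c, hc, hvc⟩ := exists_adj_of_mem_chain C.chain1 (hside hv)
    exact ⟨c, mem_verts_iff.mpr (.inl (List.mem_cons_of_mem _ hc)), hvc⟩
  · obtain ⟨c, hc, hvc⟩ := exists_adj_of_mem_chain C.chain2 (hside hv)
    exact ⟨c, mem_verts_iff.mpr (.inr (List.mem_cons_of_mem _ hc)), hvc⟩

end NCycle

theorem exists_cycle_of_fork {p u₁ u₂ m : N.V} (h₁ : N.adj p u₁) (h₂ : N.adj p u₂)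
    (hne : u₁ ≠ u₂) (hm₁ : N.reaches u₁ m) (hm₂ : N.reaches u₂ m) :
    ∃ C : NCycle N, C.r = p ∧ u₁ ∈ C.verts ∧ u₂ ∈ C.verts := by
  classical
  obtain ⟨l₁, hc₁, hl₁⟩ := List.exists_isChain_cons_of_relationReflTransGen hm₁
  obtain ⟨l₂, hc₂, hl₂⟩ := List.exists_isChain_cons_of_relationReflTransGen hm₂
  -- The first vertex of the path from `u₁` that lies on the path from `u₂` is the hybrid.
  obtain ⟨c, hc⟩ : ∃ c, (u₁ :: l₁).find? (· ∈ u₂ :: l₂) = some c :=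
    Option.isSome_iff_exists.mp <| List.find?_isSome.mpr
      ⟨m, hl₁ ▸ List.getLast_mem _, decide_eq_true (hl₂ ▸ List.getLast_mem _)⟩
  obtain ⟨hcl₂, s₁, t₁, e₁, hs₁⟩ := List.find?_eq_some_iff_append.mp hc
  obtain ⟨s₂, t₂, e₂⟩ := List.append_of_mem (of_decide_eq_true hcl₂)
  have hp₁ : (p :: (s₁ ++ [c])).IsChain N.adj :=
    (List.isChain_cons_split.mp (e₁ ▸ List.isChain_cons_cons.mpr ⟨h₁, hc₁⟩)).1
  have hp₂ : (p :: (s₂ ++ [c])).IsChain N.adj :=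
    (List.isChain_cons_split.mp (e₂ ▸ List.isChain_cons_cons.mpr ⟨h₂, hc₂⟩)).1
  have hu₁ : u₁ ∈ s₁ ++ [c] := by cases s₁ <;> simp_all
  have hu₂ : u₂ ∈ s₂ ++ [c] := by cases s₂ <;> simp_all
  have hpc : p ≠ c := fun e => (List.nodup_cons.mp (nodup_of_isChain hp₁)).1 (by simp [e])
  have hdisj : ∀ v ∈ s₁, v ∉ s₂ := fun v hv hv₂ => by simpa [e₂, hv₂] using hs₁ v hv
  have hnontriv : s₁ ≠ [] ∨ s₂ ≠ [] := by
    by_contra! h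
    simp only [h, List.nil_append, List.cons.injEq] at e₁ e₂
    exact hne (e₁.1.trans e₂.1.symm)
  refine ⟨⟨p, c, s₁, s₂, hp₁, hp₂, hpc, nodup_of_isChain hp₁, nodup_of_isChain hp₂, hdisj,
    hnontriv⟩, rfl, ?_, ?_⟩
  · exact NCycle.mem_verts_iff.mpr (.inl (List.mem_cons_of_mem _ hu₁))
  · exact NCycle.mem_verts_iff.mpr (.inr (List.mem_cons_of_mem _ hu₂))

namespace IsLevelOne

variable {C : NCycle N}

theorem mem_verts_of_fork (hN : N.IsLevelOne) {p w c m : N.V} (hp : p ∈ C.verts)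
    (hpw : N.adj p w) (hpc : N.adj p c) (hwc : w ≠ c) (hwm : N.reaches w m)
    (hcm : N.reaches c m) : w ∈ C.verts := by
  obtain ⟨C', rfl, hw, -⟩ := exists_cycle_of_fork hpw hpc hwc hwm hcm
  rwa [← hN C' C C'.r C'.root_mem hp]

theorem eq_root_of_fork (hN : N.IsLevelOne) {p u₁ u₂ m : N.V} (hp : p ∈ C.verts)
    (h₁ : N.adj p u₁) (h₂ : N.adj p u₂) (hne : u₁ ≠ u₂) (hm₁ : N.reaches u₁ m)
    (hm₂ : N.reaches u₂ m) : p = C.r := by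
  obtain ⟨C', rfl, -, -⟩ := exists_cycle_of_fork h₁ h₂ hne hm₁ hm₂
  have hrC' : C.r ∈ C'.verts := by rw [hN C' C C'.r C'.root_mem hp]; exact C.root_mem
  exact reaches_antisymm (C'.root_reaches hrC') (C.root_reaches hp)

theorem mem_verts_of_adj_of_reaches (hN : N.IsLevelOne) {v w u : N.V} (hv : v ∈ C.verts)
    (hvw : N.adj v w) (hu : u ∈ C.verts) (hwu : N.reaches w u) : w ∈ C.verts := by
  have hwh : N.reaches w C.h := hwu.trans (NCycle.reaches_hyb hu)
  have hvh : v ≠ C.h := by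
    rintro rfl
    exact (not_reaches_of_adj hvw hwh).elim
  obtain ⟨c, hc, hvc⟩ := NCycle.exists_adj_of_ne_hyb hv hvh
  by_cases hwc : w = c
  · rwa [hwc]
  · exact hN.mem_verts_of_fork hv hvw hvc hwc hwh (NCycle.reaches_hyb hc)

theorem mem_verts_of_reaches_of_reaches (hN : N.IsLevelOne) {a v b : N.V} (ha : a ∈ C.verts)
    (hav : N.reaches a v) (hvb : N.reaches v b) (hb : b ∈ C.verts) : v ∈ C.verts := by
  induction hav using Relation.ReflTransGen.head_induction_on with
  | refl => exact ha
  | head hac hcv ih => exact ih (hN.mem_verts_of_adj_of_reaches ha hac hb (hcv.trans hvb))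

theorem mem_verts_of_adj_of_reaches_below (hN : N.IsLevelOne) {v w a m : N.V}
    (hv : v ∈ C.verts) (hvw : N.adj v w) (ha : a ∈ C.verts) (hva : N.reaches v a) (hne : v ≠ a)
    (hwm : N.reaches w m) (ham : N.reaches a m) : w ∈ C.verts := by
  rcases Relation.ReflTransGen.cases_head hva with rfl | ⟨c, hvc, hca⟩
  · exact (hne rfl).elim
  have hc : c ∈ C.verts := hN.mem_verts_of_reaches_of_reaches hv (.single hvc) hca ha
  by_cases hwc : w = c
  · rwa [hwc]
  · exact hN.mem_verts_of_fork hv hvw hvc hwc hwm (hca.trans ham)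

theorem eq_root_of_reaches_of_reaches (hN : N.IsLevelOne) {w a b : N.V} (hw : w ∈ C.verts)
    (ha : a ∈ C.verts) (hb : b ∈ C.verts) (hwa : N.reaches w a) (hwb : N.reaches w b)
    (hab : ¬ N.reaches a b) (hba : ¬ N.reaches b a) : w = C.r := by
  obtain ⟨p, u₁, u₂, hwp, h₁, h₂, hne, hu₁, hu₂⟩ := exists_fork hwa hwb hab hba
  have hp : p ∈ C.verts := hN.mem_verts_of_reaches_of_reaches hw hwp (.head h₁ hu₁) ha
  have hpr : p = C.r := hN.eq_root_of_fork hp h₁ h₂ hne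
    (hu₁.trans (NCycle.reaches_hyb ha)) (hu₂.trans (NCycle.reaches_hyb hb))
  exact reaches_antisymm (hpr ▸ hwp) (NCycle.root_reaches hw)

theorem isLca_of_lastAnc (hN : N.IsLevelOne) {Y : Finset X} {v a : N.V} {y b : X}
    (hv : C.LastAnc v y) (hy : y ∈ Y) (ha : a ∈ C.verts) (hva : N.reaches v a) (hne : v ≠ a)
    (hb : b ∈ Y) (hab : N.reaches a (N.leaf b)) (hY : ∀ x ∈ Y, x ∈ N.F v) : N.IsLca Y v := by
  refine ⟨hY, fun w hvw hw => ?_⟩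
  have hwC : w ∈ C.verts := hN.mem_verts_of_adj_of_reaches_below hv.1 hvw ha hva hne (hw b hb) hab
  exact not_reaches_of_adj hvw (hv.2.2 w hwC (hw y hy))

theorem isLca_root (hN : N.IsLevelOne) {y z : X} {vy vz : N.V} (hvy : C.LastAnc vy y)
    (hvz : C.LastAnc vz z) (hyz : ¬ N.reaches vy vz) (hzy : ¬ N.reaches vz vy) :
    N.IsLca {y, z} C.r := by
  have hry := NCycle.root_reaches hvy.1
  have hrz := NCycle.root_reaches hvz.1
  refine ⟨?_, fun w hrw hw => ?_⟩
  · simp only [Finset.mem_insert, Finset.mem_singleton, forall_eq_or_imp, forall_eq]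
    exact ⟨hry.trans hvy.2.1, hrz.trans hvz.2.1⟩
  have hwy : N.reaches w (N.leaf y) := hw y (by simp)
  have hwz : N.reaches w (N.leaf z) := hw z (by simp)
  have hwC : w ∈ C.verts := hN.mem_verts_of_adj_of_reaches_below C.root_mem hrw hvy.1 hry
    (fun e => hyz (e ▸ hrz)) hwy hvy.2.1
  have hwr : w = C.r := hN.eq_root_of_reaches_of_reaches hwC hvy.1 hvz.1
    (hvy.2.2 w hwC hwy) (hvz.2.2 w hwC hwz) hyz hzy
  exact not_reaches_of_adj hrw (hwr ▸ .refl)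

end IsLevelOne

namespace Represents

variable {M : Type} {t : N.V → M} {d : SymbolicDissim3 X M}

theorem val_pair (hrep : N.Represents t d) {a b : X} (hab : a ≠ b) {v : N.V}
    (hv : N.IsLca {a, b} v) : d.val {a, b} = some (t v) :=
  hrep _ (.inl (Finset.card_pair hab)) v hv

theorem val_triple (hrep : N.Represents t d) {a b c : X} (hab : a ≠ b) (hac : a ≠ c)
    (hbc : b ≠ c) {v : N.V} (hv : N.IsLca {a, b, c} v) : d.val {a, b, c} = some (t v) :=
  hrep _ (.inr (by rw [Finset.card_insert_of_notMem (by simp [hab, hac]), Finset.card_pair hbc]))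
    v hv

end Represents

end PhyloNetwork

open PhyloNetwork in
theorem lastAnc_on_path_iff_triplet_general {X M : Type}
    [Fintype X] [DecidableEq X]
    (N : PhyloNetwork X) (hN : N.IsLevelOne) (t : N.V → M)
    (d : SymbolicDissim3 X M) (hrep : N.Represents t d)
    (C : NCycle N) (x y z : X)
    (hxy : x ≠ y) (hxz : x ≠ z) (hyz : y ≠ z)
    (hx : x ∈ C.HC) (hy : y ∈ C.RC ∧ y ∉ C.HC) (hz : z ∈ C.RC ∧ z ∉ C.HC)
    (vy vz : N.V) (hvy : C.LastAnc vy y) (hvz : C.LastAnc vz z)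
    (hlz : t vz = t C.r) (hly : t vy ≠ t C.r) :
    (N.reaches vy vz ∧ N.reaches vz C.h) ↔
      (d.val {x, y, z} = d.val {x, y} ∧ d.val {x, y} = d.val {y, z} ∧
        d.val {y, z} ≠ d.val {x, z}) := by
  have hyh : N.reaches vy C.h := NCycle.reaches_hyb hvy.1
  have hzh : N.reaches vz C.h := NCycle.reaches_hyb hvz.1
  have hvyh : vy ≠ C.h := fun e => hy.2 (show N.reaches C.h (N.leaf y) from e ▸ hvy.2.1)
  have hvzh : vz ≠ C.h := fun e => hz.2 (show N.reaches C.h (N.leaf z) from e ▸ hvz.2.1)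
  have dxy : d.val {x, y} = some (t vy) := hrep.val_pair hxy <|
    hN.isLca_of_lastAnc hvy (by simp) C.hyb_mem hyh hvyh (b := x) (by simp) hx
      (by simpa [F] using ⟨hyh.trans hx, hvy.2.1⟩)
  constructor
  · rintro ⟨hyz', -⟩
    have hvyvz : vy ≠ vz := fun e => hly (e ▸ hlz)
    have dxyz : d.val {x, y, z} = some (t vy) := hrep.val_triple hxy hxz hyz <|
      hN.isLca_of_lastAnc hvy (by simp) C.hyb_mem hyh hvyh (b := x) (by simp) hx
        (by simpa [F] using ⟨hyh.trans hx, hvy.2.1, hyz'.trans hvz.2.1⟩)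
    have dyz : d.val {y, z} = some (t vy) := hrep.val_pair hyz <|
      hN.isLca_of_lastAnc hvy (by simp) hvz.1 hyz' hvyvz (b := z) (by simp) hvz.2.1
        (by simpa [F] using ⟨hvy.2.1, hyz'.trans hvz.2.1⟩)
    have dxz : d.val {x, z} = some (t vz) := hrep.val_pair hxz <|
      hN.isLca_of_lastAnc hvz (by simp) C.hyb_mem hzh hvzh (b := x) (by simp) hx
        (by simpa [F] using ⟨hzh.trans hx, hvz.2.1⟩)
    simp [dxyz, dxy, dyz, dxz, hlz, hly]
  · rintro ⟨-, hval, -⟩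
    refine ⟨by_contra fun hyz' => ?_, hzh⟩
    by_cases hzy : N.reaches vz vy
    · have dyz : d.val {y, z} = some (t vz) := hrep.val_pair hyz <|
        hN.isLca_of_lastAnc hvz (by simp) hvy.1 hzy (fun e => hyz' (e ▸ .refl)) (b := y)
          (by simp) hvy.2.1 (by simpa [F] using ⟨hzy.trans hvy.2.1, hvz.2.1⟩)
      simp [dxy, dyz, hlz, hly] at hval
    · have dyz : d.val {y, z} = some (t C.r) := hrep.val_pair hyz (hN.isLca_root hvy hvz hyz' hzy)
      simp [dxy, dyz, hly] at hval

open PhyloNetwork in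
/-- Lemma (tripcyc): in a labelled level-1 network `(N,t)` inducing `δ = δ_N`,
for a cycle `C`, `x ∈ H(C)`, `y, z ∈ R(C) − H(C)` with
`t(v_C(z)) = t(r(C)) ≠ t(v_C(y))`: `v_C(z)` lies on the directed path from
`v_C(y)` to `h(C)` iff `y|xz` is a `δ_N`-triplet, i.e.
`δ(x,y,z) = δ(x,y) = δ(y,z) ≠ δ(x,z)`. -/
theorem lastAnc_on_path_iff_triplet {X M : Type}
    [Fintype X] [DecidableEq X] [Fintype M] [DecidableEq M]
    (N : PhyloNetwork X) (hN : N.IsLevelOne) (t : N.V → M)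
    (d : SymbolicDissim3 X M) (hrep : N.Represents t d)
    (C : NCycle N) (x y z : X)
    (hxy : x ≠ y) (hxz : x ≠ z) (hyz : y ≠ z)
    (hx : x ∈ C.HC) (hy : y ∈ C.RC ∧ y ∉ C.HC) (hz : z ∈ C.RC ∧ z ∉ C.HC)
    (vy vz : N.V) (hvy : C.LastAnc vy y) (hvz : C.LastAnc vz z)
    (hlz : t vz = t C.r) (hly : t vy ≠ t C.r) :
    (N.reaches vy vz ∧ N.reaches vz C.h) ↔
      (d.val {x, y, z} = d.val {x, y} ∧ d.val {x, y} = d.val {y, z} ∧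
        d.val {y, z} ≠ d.val {x, z}) :=
  lastAnc_on_path_iff_triplet_general N hN t d hrep C x y z hxy hxz hyz hx hy hz vy vz hvy hvz hlz
    hly
end
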